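/- arXiv:2404.13251 — 16 statements merged into one kernel-verified Lean document; each statement's English description precedes it below -/
import Mathlib

section
/- For a ∈ R, a has right stable range one if and only if for every x ∈ R there exists b ∈ R such that a + b - a·x·b is a unit of R. -/
def RightSR1 {R : Type*} [Ring R] (a : R) : Prop :=
  ∀ t : R, (∃ x y : R, a * x + t * y = 1) → ∃ b : R, IsUnit (a + t * b)

theorem rightSR1_iff {R : Type*} [Ring R] (a : R) :
    RightSR1 a ↔ ∀ x : R, ∃ b : R, IsUnit (a + b - a * x * b) := by
  constructor
  · intro h x
    obtain ⟨b, hb⟩ := h (1 - a * x) ⟨x, 1, by noncomm_ring⟩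
    exact ⟨b, by simpa [sub_mul, add_sub_assoc] using hb⟩
  · intro h t ⟨x, y, hxy⟩
    obtain ⟨b, hb⟩ := h x
    refine ⟨y * b, ?_⟩
    have hty : t * y = 1 - a * x := eq_sub_of_add_eq' hxy
    have : a + t * (y * b) = a + b - a * x * b := by
      rw [← mul_assoc, hty]; noncomm_ring
    rwa [this]
end

section
/- If a ∈ R has right stable range one and a has a one-sided inverse (there exists x with a·x = 1 or x·a = 1), then a is a unit of R. -/
theorem rightSR1_one_sided_inv {R : Type*} [Ring R] (a : R) (ha : RightSR1 a)
    (h : ∃ x : R, a * x = 1 ∨ x * a = 1) : IsUnit a := by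
  obtain ⟨x, hx | hx⟩ := h
  · obtain ⟨b, hb⟩ := ha 0 ⟨x, 0, by simp [hx]⟩
    simpa using hb
  · obtain ⟨b, hb⟩ := ha (1 - a * x) ⟨x, 1, by noncomm_ring⟩
    have hxu : x * (a + (1 - a * x) * b) = 1 := by
      have : x * (a + (1 - a * x) * b) = x * a + x * b - (x * a) * (x * b) := by noncomm_ring
      rw [this, hx]; noncomm_ring
    -- x is a unit since it's a left inverse of a unit
    obtain ⟨u, hu⟩ := hb
    have hxunit : IsUnit x := by
      have : x = ↑u⁻¹ := by
        have := congrArg (· * (↑u⁻¹ : R)) (hu ▸ hxu)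
        simpa [mul_assoc] using this
      exact this ▸ u⁻¹.isUnit
    obtain ⟨v, hv⟩ := hxunit
    have : a = ↑v⁻¹ := by
      have := congrArg ((↑v⁻¹ : R) * ·) (hv ▸ hx)
      simpa [← mul_assoc] using this
    exact this ▸ v⁻¹.isUnit
end

section
/- If f : R → S is a surjective ring homomorphism that reflects units (f(a) a unit implies a a unit), and f(a) has right stable range one in S, then a has right stable range one in R. -/
theorem rightSR1_of_map {R S : Type*} [Ring R] [Ring S] (f : R →+* S)
    (hf : Function.Surjective f)
    (hrefl : ∀ a : R, IsUnit (f a) → IsUnit a)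
    (a : R) (ha : RightSR1 (f a)) : RightSR1 a := by
  intro t ⟨x, y, hxy⟩
  obtain ⟨b', hb'⟩ := ha (f t) ⟨f x, f y, by
    have := congrArg f hxy
    simpa using this⟩
  obtain ⟨b, rfl⟩ := hf b'
  exact ⟨b, hrefl _ (by simpa using hb')⟩
end

section
/- For any a ∈ R and b in the Jacobson radical of R, a has right stable range one if and only if a + b has right stable range one. In particular every element of the Jacobson radical has right stable range one. -/
/-- In the Jacobson radical of ⊥, `1 + z` has a left inverse. -/
private lemma left_inv_of_mem_jac {R : Type*} [Ring R] {z : R}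
    (hz : z ∈ Ideal.jacobson (⊥ : Ideal R)) : ∃ w : R, w * (1 + z) = 1 := by
  obtain ⟨w, hw⟩ := Ideal.mem_jacobson_iff.1 hz 1
  rw [Ideal.mem_bot, sub_eq_zero] at hw
  rw [mul_one] at hw
  exact ⟨w, by rw [mul_add, mul_one, add_comm]; exact hw⟩

/-- `1 + z` is a unit for `z` in the Jacobson radical of ⊥. -/
lemma isUnit_one_add_jac {R : Type*} [Ring R] {z : R}
    (hz : z ∈ Ideal.jacobson (⊥ : Ideal R)) : IsUnit (1 + z) := by
  obtain ⟨w, hw⟩ := left_inv_of_mem_jac hz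
  have hwz : w * z ∈ Ideal.jacobson (⊥ : Ideal R) :=
    Ideal.mul_mem_left _ w hz
  have hneg : -(w * z) ∈ Ideal.jacobson (⊥ : Ideal R) := neg_mem hwz
  obtain ⟨v, hv⟩ := left_inv_of_mem_jac hneg
  have hw' : w = 1 + -(w * z) := by
    have h := hw; rw [mul_add, mul_one] at h
    rw [← sub_eq_add_neg]
    exact eq_sub_of_add_eq h
  have hvw : v * w = 1 := by rw [hw']; exact hv
  have hv1z : v = 1 + z := by
    calc v = v * (w * (1 + z)) := by rw [hw, mul_one]
    _ = (v * w) * (1 + z) := by rw [mul_assoc]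
    _ = 1 + z := by rw [hvw, one_mul]
  exact isUnit_iff_exists.2 ⟨w, by rw [← hv1z]; exact hvw, hw⟩

/-- If `1 - u*v` is a unit then so is `1 - v*u`. -/
lemma isUnit_one_sub_swap {R : Type*} [Ring R] {u v : R}
    (h : IsUnit (1 - u * v)) : IsUnit (1 - v * u) := by
  obtain ⟨w, hw1, hw2⟩ := isUnit_iff_exists.1 h
  refine isUnit_iff_exists.2 ⟨1 + v * w * u, ?_, ?_⟩
  · have : (1 - u * v) * w = 1 := hw1
    calc (1 - v * u) * (1 + v * w * u)
        = 1 - v * u + v * ((1 - u * v) * w) * u := by noncomm_ring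
      _ = 1 := by rw [this]; noncomm_ring
  · have : w * (1 - u * v) = 1 := hw2
    calc (1 + v * w * u) * (1 - v * u)
        = 1 - v * u + v * (w * (1 - u * v)) * u := by noncomm_ring
      _ = 1 := by rw [this]; noncomm_ring

lemma isUnit_add_jac_right {R : Type*} [Ring R] {z : R}
    (hz : z ∈ Ideal.jacobson (⊥ : Ideal R)) (y : R) : IsUnit (1 + z * y) := by
  have h1 : IsUnit (1 - (-y) * z) := by
    have := isUnit_one_add_jac (Ideal.mul_mem_left _ y hz)
    simpa [sub_eq_add_neg, neg_mul] using this
  have := isUnit_one_sub_swap h1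
  simpa [sub_eq_add_neg, mul_neg, neg_mul] using this

theorem rightSR1_add_jacobson {R : Type*} [Ring R] (a b : R)
    (hb : b ∈ Ideal.jacobson (⊥ : Ideal R)) :
    (RightSR1 a ↔ RightSR1 (a + b)) ∧ RightSR1 b := by
  -- key: unit plus jacobson element is a unit
  have key : ∀ (u c : R), c ∈ Ideal.jacobson (⊥ : Ideal R) → IsUnit u → IsUnit (u + c) := by
    intro u c hc hu
    obtain ⟨w, hw1, hw2⟩ := isUnit_iff_exists.1 hu
    have : IsUnit (1 + w * c) := isUnit_one_add_jac (Ideal.mul_mem_left _ w hc)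
    have h2 : u + c = u * (1 + w * c) := by
      rw [mul_add, mul_one, ← mul_assoc, hw1, one_mul]
    rw [h2]
    exact hu.mul this
  -- key2: RightSR1 transfers along adding jacobson element
  have main : ∀ (a' b' : R), b' ∈ Ideal.jacobson (⊥ : Ideal R) → RightSR1 a' →
      RightSR1 (a' + b') := by
    intro a' b' hb' ha t ⟨x, y, hxy⟩
    -- a'*x + t*y = 1 - b'*x which is a unit
    have hbx : IsUnit (1 - b' * x) := by
      have := isUnit_add_jac_right (neg_mem hb') x
      simpa [sub_eq_add_neg, neg_mul] using this
    obtain ⟨w, hw1, hw2⟩ := isUnit_iff_exists.1 hbx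
    have heq : a' * (x * w) + t * (y * w) = 1 := by
      have h1 : a' * x + t * y = 1 - b' * x := by
        rw [add_mul] at hxy
        rw [eq_sub_iff_add_eq]
        calc a' * x + t * y + b' * x = a' * x + b' * x + t * y := by abel
          _ = 1 := hxy
      calc a' * (x * w) + t * (y * w) = (a' * x + t * y) * w := by noncomm_ring
        _ = (1 - b' * x) * w := by rw [h1]
        _ = 1 := hw1
    obtain ⟨c, hc⟩ := ha t ⟨x * w, y * w, heq⟩
    refine ⟨c, ?_⟩
    have : a' + b' + t * c = (a' + t * c) + b' := by abel
    rw [this]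
    exact key _ _ hb' hc
  refine ⟨⟨fun h => main a b hb h, fun h => ?_⟩, ?_⟩
  · have := main (a + b) (-b) (neg_mem hb) h
    simpa using this
  · intro t ⟨x, y, hxy⟩
    -- t*y = 1 - b*x is a unit, so t has a right inverse
    have hbx : IsUnit (1 - b * x) := by
      have := isUnit_add_jac_right (neg_mem hb) x
      simpa [sub_eq_add_neg, neg_mul] using this
    obtain ⟨w, hw1, hw2⟩ := isUnit_iff_exists.1 hbx
    have h1 : t * y = 1 - b * x := by
      rw [eq_sub_iff_add_eq, add_comm]; exact hxy
    have hfin : b + t * (y * w * (1 - b)) = 1 := by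
      calc b + t * (y * w * (1 - b)) = b + ((t * y) * w) * (1 - b) := by noncomm_ring
        _ = b + ((1 - b * x) * w) * (1 - b) := by rw [h1]
        _ = 1 := by rw [hw1]; noncomm_ring
    exact ⟨y * w * (1 - b), by rw [hfin]; exact isUnit_one⟩
end

section
/- An element b ∈ R lies in the Jacobson radical of R if and only if b has right stable range one and b + u is a unit for every unit u of R. -/
/-- If `x*y + 1` is a unit then so is `y*x + 1`. -/
lemma isUnit_mul_swap_add_one {R : Type*} [Ring R] {x y : R}
    (h : IsUnit (x * y + 1)) : IsUnit (y * x + 1) := by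
  obtain ⟨u, hu⟩ := h
  set w : R := (↑u⁻¹ : R) with hwdef
  have hw1 : (x * y + 1) * w = 1 := by rw [← hu, hwdef]; exact u.mul_inv
  have hw2 : w * (x * y + 1) = 1 := by rw [← hu, hwdef]; exact u.inv_mul
  have k1 : (y * x + 1) * (1 - y * w * x) = 1 := by
    have e : (y * x + 1) * (1 - y * w * x) = 1 + y * x - y * ((x * y + 1) * w) * x := by
      noncomm_ring
    rw [e, hw1, mul_one]
    noncomm_ring
  have k2 : (1 - y * w * x) * (y * x + 1) = 1 := by
    have e : (1 - y * w * x) * (y * x + 1) = 1 + y * x - y * (w * (x * y + 1)) * x := by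
      noncomm_ring
    rw [e, hw2, mul_one]
    noncomm_ring
  exact ⟨⟨y * x + 1, 1 - y * w * x, k1, k2⟩, rfl⟩

/-- Noncommutative version of `Ideal.mem_jacobson_bot`. -/
lemma mem_jacobson_bot' {R : Type*} [Ring R] {x : R} :
    x ∈ Ideal.jacobson (⊥ : Ideal R) ↔ ∀ y, IsUnit (x * y + 1) := by
  constructor
  · intro h
    have leftinv : ∀ y : R, ∃ z : R, z * (y * x + 1) = 1 := by
      intro y
      obtain ⟨z, hz⟩ := Ideal.mem_jacobson_iff.1 h y
      rw [Ideal.mem_bot] at hz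
      refine ⟨z, ?_⟩
      have h1 : z * y * x + z = 1 := sub_eq_zero.mp hz
      rw [show z * (y * x + 1) = z * y * x + z from by noncomm_ring]
      exact h1
    have key : ∀ y : R, IsUnit (y * x + 1) := by
      intro y
      obtain ⟨z, hz⟩ := leftinv y
      have h1 : z * y * x + z = 1 := by rw [← hz]; noncomm_ring
      obtain ⟨w, hw⟩ := leftinv (-(z * y))
      have h2 : -(z * y) * x + 1 = z := by rw [← h1]; noncomm_ring
      rw [h2] at hw
      have hwz : w = y * x + 1 := by
        calc w = w * 1 := (mul_one w).symm
          _ = w * (z * (y * x + 1)) := by rw [hz]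
          _ = (w * z) * (y * x + 1) := by rw [mul_assoc]
          _ = y * x + 1 := by rw [hw, one_mul]
      rw [hwz] at hw
      exact ⟨⟨y * x + 1, z, hw, hz⟩, rfl⟩
    intro y
    exact isUnit_mul_swap_add_one (key y)
  · intro h
    rw [Ideal.mem_jacobson_iff]
    intro y
    obtain ⟨u, hu⟩ := isUnit_mul_swap_add_one (h y)
    refine ⟨↑u⁻¹, ?_⟩
    rw [Ideal.mem_bot, sub_eq_zero]
    have e : (↑u⁻¹ : R) * y * x + ↑u⁻¹ = (↑u⁻¹ : R) * (y * x + 1) := by noncomm_ring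
    rw [e, ← hu, u.inv_mul]

theorem mem_jacobson_iff_rightSR1 {R : Type*} [Ring R] (b : R) :
    b ∈ Ideal.jacobson (⊥ : Ideal R) ↔
      RightSR1 b ∧ ∀ u : R, IsUnit u → IsUnit (b + u) := by
  rw [mem_jacobson_bot']
  constructor
  · intro h
    constructor
    · rintro t ⟨x, y, hxy⟩
      have hu : IsUnit (t * y) := by
        have h1 : IsUnit (b * (-x) + 1) := h (-x)
        have heq : b * (-x) + 1 = t * y := by rw [← hxy]; noncomm_ring
        rwa [heq] at h1
      obtain ⟨u, hu⟩ := hu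
      refine ⟨y * (↑u⁻¹ : R) * (1 - b), ?_⟩
      have h1 : t * y * (↑u⁻¹ : R) = 1 := by rw [← hu]; exact u.mul_inv
      have h2 : t * (y * (↑u⁻¹ : R) * (1 - b)) = 1 - b := by
        calc t * (y * ↑u⁻¹ * (1 - b)) = (t * y * ↑u⁻¹) * (1 - b) := by noncomm_ring
          _ = 1 - b := by rw [h1, one_mul]
      rw [h2]
      have : b + (1 - b) = 1 := by noncomm_ring
      rw [this]
      exact isUnit_one
    · intro u hu
      obtain ⟨v, hv⟩ := hu
      have h1 : IsUnit (b * (↑v⁻¹ : R) + 1) := h _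
      have h2 : b + u = (b * (↑v⁻¹ : R) + 1) * u := by
        rw [add_mul, one_mul, mul_assoc, ← hv, v.inv_mul, mul_one]
      rw [h2]
      exact h1.mul ⟨v, hv⟩
  · rintro ⟨hsr, hub⟩
    have key : ∀ y : R, ∃ s : R, (b * y + 1) * s = 1 := by
      intro y
      obtain ⟨c, hc⟩ := hsr (b * y + 1) ⟨-y, 1, by noncomm_ring⟩
      have hmv : IsUnit (-(b + (b * y + 1) * c)) := hc.neg
      have h2 : IsUnit (b + -(b + (b * y + 1) * c)) := hub _ hmv
      have h3 : IsUnit ((b * y + 1) * c) := by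
        have e : b + -(b + (b * y + 1) * c) = -((b * y + 1) * c) := by noncomm_ring
        rw [e] at h2
        simpa using h2.neg
      obtain ⟨w, hw⟩ := h3
      refine ⟨c * ↑w⁻¹, ?_⟩
      rw [← mul_assoc, ← hw, w.mul_inv]
    intro y
    obtain ⟨s, hs⟩ := key y
    have hseq : b * (-(y * s)) + 1 = s := by rw [← hs]; noncomm_ring
    obtain ⟨s', hs'⟩ := key (-(y * s))
    rw [hseq] at hs'
    have hs'eq : s' = b * y + 1 := by
      calc s' = 1 * s' := (one_mul s').symm
        _ = ((b * y + 1) * s) * s' := by rw [hs]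
        _ = (b * y + 1) * (s * s') := by rw [mul_assoc]
        _ = b * y + 1 := by rw [hs', mul_one]
    rw [hs'eq] at hs'
    exact ⟨⟨b * y + 1, s, hs, hs'⟩, rfl⟩
end

section
/- If a and a' both have right stable range one in R, then the product a·a' has right stable range one. Consequently, the set of right stable range one elements of R is a multiplicative monoid containing the unit group of R. -/
theorem rightSR1_mul {R : Type*} [Ring R] :
    (∀ a a' : R, RightSR1 a → RightSR1 a' → RightSR1 (a * a')) ∧
    RightSR1 (1 : R) ∧ (∀ u : R, IsUnit u → RightSR1 u) := by
  refine ⟨?_, ?_, ?_⟩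
  · intro a a' ha ha' t ht
    obtain ⟨x, y, hxy⟩ := ht
    obtain ⟨b, hb⟩ := ha t ⟨a' * x, y, by rw [← mul_assoc]; exact hxy⟩
    obtain ⟨u, hu⟩ := hb
    have htb : (↑u⁻¹ : R) * (t * b) = 1 - ↑u⁻¹ * a := by
      have h1 : (↑u⁻¹ : R) * ↑u = 1 := u.inv_mul
      rw [hu, mul_add] at h1
      exact eq_sub_of_add_eq' h1
    have key : a' * (x * ↑u) + (↑u⁻¹ * t) * ((y - b * (a' * x)) * ↑u) = 1 := by
      have h2 : a' * (x * ↑u) + (↑u⁻¹ * t) * ((y - b * (a' * x)) * ↑u)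
          = (a' * x + ↑u⁻¹ * t * y - ↑u⁻¹ * (t * b) * (a' * x)) * ↑u := by
        noncomm_ring
      rw [h2, htb]
      have h3 : (a' * x + ↑u⁻¹ * t * y - (1 - ↑u⁻¹ * a) * (a' * x)) * ↑u
          = ↑u⁻¹ * (a * (a' * x) + t * y) * ↑u := by noncomm_ring
      rw [h3, ← mul_assoc] at *
      rw [hxy, mul_one]
      exact u.inv_mul
    obtain ⟨c, hc⟩ := ha' (↑u⁻¹ * t) ⟨x * ↑u, (y - b * (a' * x)) * ↑u, key⟩
    obtain ⟨v, hv⟩ := hc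
    refine ⟨b * a' + c, ?_⟩
    have heq : a * a' + t * (b * a' + c) = ↑u * ↑v := by
      rw [hv]
      conv_rhs => rw [mul_add]
      have huc : (↑u : R) * (↑u⁻¹ * t * c) = t * c := by
        rw [← mul_assoc, ← mul_assoc, u.mul_inv, one_mul]
      rw [huc, hu]; noncomm_ring
    rw [heq]
    exact ⟨u * v, rfl⟩
  · intro t _
    exact ⟨0, by simp⟩
  · intro u hu t _
    exact ⟨0, by simpa using hu⟩
end

section
/- If x·a·y = 1 in R, a has right stable range one, and either x or y has right stable range one, then a is a unit of R. -/
/-- A regular element with right stable range one is unit-regular. -/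
lemma rsr1_unitReg {R : Type*} [Ring R] {a c : R} (ha : RightSR1 a)
    (hc : a * c * a = a) : ∃ v : Rˣ, a * ↑v * a = a := by
  obtain ⟨b, hu⟩ := ha (1 - a * c) ⟨c, 1, by noncomm_ring⟩
  obtain ⟨W, hW⟩ := hu
  have key : a * c * ↑W = a := by
    rw [hW]
    have expand : a * c * (a + (1 - a * c) * b)
        = a * c * a + (a * c - (a * c * a) * c) * b := by noncomm_ring
    rw [expand, hc]
    noncomm_ring
  have h2 : a * c = a * ↑W⁻¹ := by
    have := congrArg (· * (↑W⁻¹ : R)) key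
    simpa [mul_assoc] using this
  refine ⟨W⁻¹, ?_⟩
  rw [← h2, hc]

/-- A right-invertible element with right stable range one is a unit. -/
lemma rsr1_rightInv {R : Type*} [Ring R] {a d : R} (ha : RightSR1 a)
    (hd : a * d = 1) : IsUnit a := by
  have hreg : a * d * a = a := by rw [hd, one_mul]
  obtain ⟨v, hv⟩ := rsr1_unitReg ha hreg
  set g := a * ↑v with hg
  have hgg : g * g = g := by
    rw [hg]
    calc a * ↑v * (a * ↑v) = (a * ↑v * a) * ↑v := by noncomm_ring
    _ = a * ↑v := by rw [hv]
  have hgr : g * (↑v⁻¹ * d) = 1 := by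
    rw [hg]
    calc a * ↑v * (↑v⁻¹ * d) = a * (↑v * ↑v⁻¹) * d := by noncomm_ring
    _ = a * d := by simp
    _ = 1 := hd
  have hg1 : g = 1 := by
    calc g = g * (g * (↑v⁻¹ * d)) := by rw [hgr, mul_one]
    _ = (g * g) * (↑v⁻¹ * d) := by noncomm_ring
    _ = g * (↑v⁻¹ * d) := by rw [hgg]
    _ = 1 := hgr
  have : a = ↑v⁻¹ := by
    have := congrArg (· * (↑v⁻¹ : R)) hg1
    simpa [hg, mul_assoc] using this
  rw [this]
  exact v⁻¹.isUnit

/-- A left-invertible element with right stable range one is a unit. -/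
lemma rsr1_leftInv {R : Type*} [Ring R] {a w : R} (ha : RightSR1 a)
    (hw : w * a = 1) : IsUnit a := by
  obtain ⟨b, hu⟩ := ha (1 - a * w) ⟨w, 1, by noncomm_ring⟩
  obtain ⟨U, hU⟩ := hu
  have key : w * ↑U = 1 := by
    rw [hU]
    have expand : w * (a + (1 - a * w) * b)
        = w * a + (w - (w * a) * w) * b := by noncomm_ring
    rw [expand, hw]
    noncomm_ring
  have hwU : w = ↑U⁻¹ := by
    have := congrArg (· * (↑U⁻¹ : R)) key
    simpa [mul_assoc] using this
  have : a = ↑U := by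
    have := congrArg (· * a) hwU
    rw [hw] at this
    have h2 := congrArg ((↑U : R) * ·) this
    simpa [← mul_assoc] using h2.symm
  rw [this]
  exact U.isUnit

theorem isUnit_of_xay {R : Type*} [Ring R] (a x y : R) (h : x * a * y = 1)
    (ha : RightSR1 a) (hxy : RightSR1 x ∨ RightSR1 y) : IsUnit a := by
  rcases hxy with hx | hy
  · -- Case: x has right stable range one
    obtain ⟨b, hu⟩ := ha (1 - a * y * x) ⟨y * x, 1, by noncomm_ring⟩
    obtain ⟨U, hU⟩ := hu
    have hxu : x * (↑U * y) = 1 := by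
      rw [hU]
      have expand : x * ((a + (1 - a * y * x) * b) * y)
          = x * a * y + (x - (x * a * y) * x) * (b * y) := by noncomm_ring
      rw [expand, h]
      noncomm_ring
    -- x is right invertible, and x has right SR1, so x is a unit
    have hxunit : IsUnit x := rsr1_rightInv hx hxu
    obtain ⟨X, hX⟩ := hxunit
    -- a * y = x⁻¹, so a is right invertible
    have hay : a * (y * ↑X) = 1 := by
      have h1 : ↑X * (a * y) = 1 := by rw [hX]; rw [← mul_assoc]; exact h
      have h2 : a * y = ↑X⁻¹ := by
        have := congrArg ((↑X⁻¹ : R) * ·) h1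
        simpa [← mul_assoc] using this
      calc a * (y * ↑X) = (a * y) * ↑X := by rw [mul_assoc]
      _ = ↑X⁻¹ * ↑X := by rw [h2]
      _ = 1 := by simp
    exact rsr1_rightInv ha hay
  · -- Case: y has right stable range one
    obtain ⟨b, hv⟩ := hy (1 - y * x * a) ⟨x * a, 1, by noncomm_ring⟩
    obtain ⟨V, hV⟩ := hv
    have key : x * a * ↑V = 1 := by
      rw [hV]
      have expand : x * a * (y + (1 - y * x * a) * b)
          = x * a * y + (x * a - (x * a * y) * (x * a)) * b := by noncomm_ring
      rw [expand, h]
      noncomm_ring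
    have hw : (↑V * x) * a = 1 := by
      have h2 : x * a = ↑V⁻¹ := by
        have := congrArg (· * (↑V⁻¹ : R)) key
        simpa [mul_assoc] using this
      calc (↑V * x) * a = ↑V * (x * a) := by rw [mul_assoc]
      _ = ↑V * ↑V⁻¹ := by rw [h2]
      _ = 1 := by simp
    exact rsr1_leftInv ha hw
end

section
/- For any three elements a, b, x of a ring R: a + b - a·x·b is a unit of R if and only if a + b - b·x·a is a unit of R (Super Jacobson's Lemma). -/
private lemma super_jacobson_aux {R : Type*} [Ring R] (a b x : R)
    (h : IsUnit (a + b - a * x * b)) : IsUnit (a + b - b * x * a) := by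
  obtain ⟨u, hu⟩ := h
  set v : R := ((u⁻¹ : Rˣ) : R) with hv
  have hv1 : (a + b - a * x * b) * v = 1 := by rw [← hu]; exact u.mul_inv
  have hv2 : v * (a + b - a * x * b) = 1 := by rw [← hu]; exact u.inv_mul
  have k1 : (a + b - b * x * a) * ((1 - x * b) * v) = 1 - b * x := by
    have id1 : (a + b - b * x * a) * (1 - x * b)
        = (1 - b * x) * (a + b - a * x * b) := by noncomm_ring
    rw [← mul_assoc, id1, mul_assoc, hv1, mul_one]
  have k2 : (v * (1 - a * x)) * (a + b - b * x * a) = 1 - x * a := by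
    have id2 : (1 - a * x) * (a + b - b * x * a)
        = (a + b - a * x * b) * (1 - x * a) := by noncomm_ring
    rw [mul_assoc, id2, ← mul_assoc, hv2, one_mul]
  refine isUnit_iff_exists.mpr ⟨(1 - x * b) * v * (1 - a * x) + x, ?_, ?_⟩
  · have e : (a + b - b * x * a) * ((1 - x * b) * v * (1 - a * x) + x)
        = ((a + b - b * x * a) * ((1 - x * b) * v)) * (1 - a * x)
          + (a + b - b * x * a) * x := by noncomm_ring
    rw [e, k1]; noncomm_ring
  · have e : ((1 - x * b) * v * (1 - a * x) + x) * (a + b - b * x * a)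
        = (1 - x * b) * ((v * (1 - a * x)) * (a + b - b * x * a))
          + x * (a + b - b * x * a) := by noncomm_ring
    rw [e, k2]; noncomm_ring

theorem super_jacobson {R : Type*} [Ring R] (a b x : R) :
    IsUnit (a + b - a * x * b) ↔ IsUnit (a + b - b * x * a) := by
  constructor
  · exact super_jacobson_aux a b x
  · intro h
    have := super_jacobson_aux b a x (by rwa [add_comm a b] at h)
    rwa [add_comm b a] at this
end

section
/- For any element a of any ring R, a has right stable range one if and only if a has left stable range one. -/
def LeftSR1 {R : Type*} [Ring R] (a : R) : Prop :=
  ∀ t : R, (∃ x y : R, x * a + y * t = 1) → ∃ b : R, IsUnit (a + b * t)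

theorem rightSR1_iff_leftSR1 {R : Type*} [Ring R] (a : R) :
    RightSR1 a ↔ LeftSR1 a := by
  constructor
  · intro hR t ht
    obtain ⟨x, y, h1⟩ := ht
    have hyt : y * t = 1 - x * a := eq_sub_of_add_eq' h1
    obtain ⟨b, hb⟩ := hR (1 - a * x) ⟨x, 1, by noncomm_ring⟩
    obtain ⟨u, hu⟩ := hb
    refine ⟨b * y, ?_⟩
    rw [mul_assoc, hyt]
    set v := ((↑u⁻¹ : R)) with hv
    have h2 : (a + (1 - a * x) * b) * v = 1 := by rw [← hu, hv]; exact u.mul_inv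
    have h3 : v * (a + (1 - a * x) * b) = 1 := by rw [← hu, hv]; exact u.inv_mul
    rw [isUnit_iff_exists]
    refine ⟨x + (1 - x * b) * v * (1 - a * x), ?_, ?_⟩
    · have A : (a + b * (1 - x * a)) * (1 - x * b)
          = (1 - b * x) * (a + (1 - a * x) * b) := by noncomm_ring
      calc (a + b * (1 - x * a)) * (x + (1 - x * b) * v * (1 - a * x))
          = (a + b * (1 - x * a)) * x
            + ((a + b * (1 - x * a)) * (1 - x * b)) * (v * (1 - a * x)) := by noncomm_ring
        _ = (a + b * (1 - x * a)) * x
            + ((1 - b * x) * (a + (1 - a * x) * b)) * (v * (1 - a * x)) := by rw [A]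
        _ = (a + b * (1 - x * a)) * x
            + (1 - b * x) * (((a + (1 - a * x) * b) * v) * (1 - a * x)) := by noncomm_ring
        _ = (a + b * (1 - x * a)) * x
            + (1 - b * x) * (1 * (1 - a * x)) := by rw [h2]
        _ = 1 := by noncomm_ring
    · have B : (1 - a * x) * (a + b * (1 - x * a))
          = (a + (1 - a * x) * b) * (1 - x * a) := by noncomm_ring
      calc (x + (1 - x * b) * v * (1 - a * x)) * (a + b * (1 - x * a))
          = x * (a + b * (1 - x * a))
            + (1 - x * b) * (v * ((1 - a * x) * (a + b * (1 - x * a)))) := by noncomm_ring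
        _ = x * (a + b * (1 - x * a))
            + (1 - x * b) * (v * ((a + (1 - a * x) * b) * (1 - x * a))) := by rw [B]
        _ = x * (a + b * (1 - x * a))
            + (1 - x * b) * ((v * (a + (1 - a * x) * b)) * (1 - x * a)) := by noncomm_ring
        _ = x * (a + b * (1 - x * a))
            + (1 - x * b) * (1 * (1 - x * a)) := by rw [h3]
        _ = 1 := by noncomm_ring
  · intro hL t ht
    obtain ⟨x, y, h1⟩ := ht
    have hty : t * y = 1 - a * x := eq_sub_of_add_eq' h1
    obtain ⟨b, hb⟩ := hL (1 - x * a) ⟨x, 1, by noncomm_ring⟩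
    obtain ⟨u, hu⟩ := hb
    refine ⟨y * b, ?_⟩
    rw [← mul_assoc, hty]
    set v := ((↑u⁻¹ : R)) with hv
    have h2 : (a + b * (1 - x * a)) * v = 1 := by rw [← hu, hv]; exact u.mul_inv
    have h3 : v * (a + b * (1 - x * a)) = 1 := by rw [← hu, hv]; exact u.inv_mul
    rw [isUnit_iff_exists]
    refine ⟨x + (1 - x * a) * v * (1 - b * x), ?_, ?_⟩
    · have B : (1 - a * x) * (a + b * (1 - x * a))
          = (a + (1 - a * x) * b) * (1 - x * a) := by noncomm_ring
      calc (a + (1 - a * x) * b) * (x + (1 - x * a) * v * (1 - b * x))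
          = (a + (1 - a * x) * b) * x
            + ((a + (1 - a * x) * b) * (1 - x * a)) * (v * (1 - b * x)) := by noncomm_ring
        _ = (a + (1 - a * x) * b) * x
            + ((1 - a * x) * (a + b * (1 - x * a))) * (v * (1 - b * x)) := by rw [B]
        _ = (a + (1 - a * x) * b) * x
            + (1 - a * x) * (((a + b * (1 - x * a)) * v) * (1 - b * x)) := by noncomm_ring
        _ = (a + (1 - a * x) * b) * x
            + (1 - a * x) * (1 * (1 - b * x)) := by rw [h2]
        _ = 1 := by noncomm_ring
    · have A : (a + b * (1 - x * a)) * (1 - x * b)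
          = (1 - b * x) * (a + (1 - a * x) * b) := by noncomm_ring
      calc (x + (1 - x * a) * v * (1 - b * x)) * (a + (1 - a * x) * b)
          = x * (a + (1 - a * x) * b)
            + (1 - x * a) * (v * ((1 - b * x) * (a + (1 - a * x) * b))) := by noncomm_ring
        _ = x * (a + (1 - a * x) * b)
            + (1 - x * a) * (v * ((a + b * (1 - x * a)) * (1 - x * b))) := by rw [← A]
        _ = x * (a + (1 - a * x) * b)
            + (1 - x * a) * ((v * (a + b * (1 - x * a))) * (1 - x * b)) := by noncomm_ring
        _ = x * (a + (1 - a * x) * b)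
            + (1 - x * a) * (1 * (1 - x * b)) := by rw [h3]
        _ = 1 := by noncomm_ring
end

section
/- For any a, x in a ring R, 1 - a·x + a·x·a is a unit if and only if 1 - x·a + a·x·a is a unit, if and only if 1 - a·x + a²·x is a unit, if and only if 1 - x·a + x·a² is a unit. -/
theorem jacobson_unit {R : Type*} [Ring R] (x y : R) :
    IsUnit (1 - x * y) ↔ IsUnit (1 - y * x) := by
  have h₁ : ∀ x y : R, IsUnit (1 - x * y) → IsUnit (1 - y * x) := by
    refine fun x y h => ⟨⟨1 - y * x, 1 + y * h.unit.inv * x, ?_, ?_⟩, rfl⟩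
    · calc
        (1 - y * x) * (1 + y * (IsUnit.unit h).inv * x) =
            1 - y * x + y * ((1 - x * y) * h.unit.inv) * x := by noncomm_ring
        _ = 1 := by simp only [Units.inv_eq_val_inv, IsUnit.mul_val_inv, mul_one, sub_add_cancel]
    · calc
        (1 + y * (IsUnit.unit h).inv * x) * (1 - y * x) =
            1 - y * x + y * (h.unit.inv * (1 - x * y)) * x := by noncomm_ring
        _ = 1 := by simp only [Units.inv_eq_val_inv, IsUnit.val_inv_mul, mul_one, sub_add_cancel]
  exact ⟨h₁ x y, h₁ y x⟩

theorem four_unit_equiv {R : Type*} [Ring R] (a x : R) :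
    (IsUnit (1 - a * x + a * x * a) ↔ IsUnit (1 - x * a + a * x * a)) ∧
    (IsUnit (1 - x * a + a * x * a) ↔ IsUnit (1 - a * x + a * a * x)) ∧
    (IsUnit (1 - a * x + a * a * x) ↔ IsUnit (1 - x * a + x * a * a)) := by
  have e1 : 1 - a * x + a * x * a = 1 - (a * x) * (1 - a) := by noncomm_ring
  have e2 : 1 - x * a + a * x * a = 1 - ((1 - a) * x) * a := by noncomm_ring
  have e3 : 1 - a * x + a * a * x = 1 - (1 - a) * (a * x) := by noncomm_ring
  have e3' : 1 - a * x + a * a * x = 1 - a * ((1 - a) * x) := by noncomm_ring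
  have e4 : 1 - x * a + x * a * a = 1 - (x * a) * (1 - a) := by noncomm_ring
  have h13 : IsUnit (1 - a * x + a * x * a) ↔ IsUnit (1 - a * x + a * a * x) := by
    rw [e1, e3]; exact jacobson_unit _ _
  have h23 : IsUnit (1 - x * a + a * x * a) ↔ IsUnit (1 - a * x + a * a * x) := by
    rw [e2, e3']; exact jacobson_unit _ _
  have h34 : IsUnit (1 - a * x + a * a * x) ↔ IsUnit (1 - x * a + x * a * a) := by
    have e2' : 1 - x * a + a * x * a = 1 - (1 - a) * (x * a) := by noncomm_ring
    have h24 : IsUnit (1 - x * a + a * x * a) ↔ IsUnit (1 - x * a + x * a * a) := by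
      rw [e2', e4]; exact (jacobson_unit _ _).symm
    exact h23.symm.trans h24
  exact ⟨h13.trans h23.symm, h23, h34⟩
end

section
/- If (R, *) is a ring with involution, then for any a ∈ R, a has right stable range one if and only if a* has right stable range one. -/
/-- Core lemma: if `a` has right stable range one and `c * a + d * s = 1`,
then `a + b * s` is a unit for some `b` (the "left" stable range one condition).
Proof: apply the hypothesis to the pair `(a, 1 - a*c)`, obtaining a unit
`u = a + (1 - a*c)*b`.  Then `a + (b*d)*s` is a unit with explicit two-sided
inverse `c + (1 - c*b) * u⁻¹ * (1 - a*c)`. -/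
private lemma rightSR1_core {R : Type*} [Ring R] {a : R} (H : RightSR1 a)
    {c d s : R} (h : c * a + d * s = 1) : ∃ b : R, IsUnit (a + b * s) := by
  obtain ⟨b, hb⟩ := H (1 - a * c) ⟨c, 1, by noncomm_ring⟩
  obtain ⟨u, hu⟩ := hb
  set v : R := ((u⁻¹ : Rˣ) : R) with hvdef
  have huv : (a + (1 - a * c) * b) * v = 1 := by
    rw [← hu, hvdef]; exact_mod_cast u.mul_inv
  have hvu : v * (a + (1 - a * c) * b) = 1 := by
    rw [← hu, hvdef]; exact_mod_cast u.inv_mul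
  have hds : d * s = 1 - c * a := by rw [← h]; noncomm_ring
  have h1 : (1 - a * c) * a + (1 - a * c) * b * (d * s)
      = (a + (1 - a * c) * b) * (d * s) := by rw [hds]; noncomm_ring
  have key2 : (c + (1 - c * b) * v * (1 - a * c)) * (a + b * d * s) = 1 := by
    have e1 : (c + (1 - c * b) * v * (1 - a * c)) * (a + b * d * s)
        = c * a + c * b * (d * s)
          + (1 - c * b) * (v * ((1 - a * c) * a + (1 - a * c) * b * (d * s))) := by
      noncomm_ring
    rw [e1, h1, ← mul_assoc v, hvu, one_mul]
    have e2 : c * a + c * b * (d * s) + (1 - c * b) * (d * s) = c * a + d * s := by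
      noncomm_ring
    rw [e2, h]
  have keyA : (a + b * (d * s)) * (1 - c * b)
      = (1 - b * c) * (a + (1 - a * c) * b) := by rw [hds]; noncomm_ring
  have key3 : (a + b * d * s) * (c + (1 - c * b) * v * (1 - a * c)) = 1 := by
    have e1 : (a + b * d * s) * (c + (1 - c * b) * v * (1 - a * c))
        = a * c + b * (d * s) * c
          + ((a + b * (d * s)) * (1 - c * b)) * v * (1 - a * c) := by
      noncomm_ring
    rw [e1, keyA, mul_assoc (1 - b * c), huv, mul_one]
    rw [hds]; noncomm_ring
  exact ⟨b * d, ⟨⟨a + b * d * s, c + (1 - c * b) * v * (1 - a * c), key3, key2⟩,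
    by simp [mul_assoc]⟩⟩

theorem rightSR1_star {R : Type*} [Ring R] [StarRing R] (a : R) :
    RightSR1 a ↔ RightSR1 (star a) := by
  suffices L : ∀ b : R, RightSR1 b → RightSR1 (star b) by
    constructor
    · exact L a
    · intro h
      simpa using L (star a) h
  intro a H t ht
  obtain ⟨x, y, hxy⟩ := ht
  have h' : (star x) * a + (star y) * (star t) = 1 := by
    have := congrArg star hxy
    simpa [star_add, star_mul, star_star] using this
  obtain ⟨b, hb⟩ := rightSR1_core H h'
  refine ⟨star b, ?_⟩
  have := hb.star
  simpa [star_add, star_mul, star_star] using this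
end

section
/- A von Neumann regular element a ∈ R has right stable range one if and only if a is unit-regular (there is a unit u of R with a = a·u·a). -/
theorem regular_rightSR1_iff_unitRegular {R : Type*} [Ring R] (a : R)
    (hreg : ∃ x : R, a * x * a = a) :
    RightSR1 a ↔ ∃ u : R, IsUnit u ∧ a * u * a = a := by
  obtain ⟨x, hx⟩ := hreg
  constructor
  · intro h
    obtain ⟨b, v, hv⟩ := h (1 - a * x) ⟨x, 1, by noncomm_ring⟩
    refine ⟨↑v⁻¹, (v⁻¹).isUnit, ?_⟩
    have hav : a * x * (v : R) = a := by
      rw [hv]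
      have h2 : a * x * (a + (1 - a * x) * b)
          = a * x * a + (a * x * b - a * x * a * (x * b)) := by noncomm_ring
      rw [h2, hx]
      noncomm_ring
    calc a * ↑v⁻¹ * a = (a * x * ↑v) * ↑v⁻¹ * a := by rw [hav]
      _ = a * x * (↑v * ↑v⁻¹) * a := by noncomm_ring
      _ = a := by rw [Units.mul_inv, mul_one, hx]
  · rintro ⟨u, hu, hau⟩ t ⟨p, q, hpq⟩
    lift u to Rˣ using hu
    have h0 : (1 - a * ↑u) * a = 0 := by
      rw [sub_mul, one_mul, hau, sub_self]
    have h1 : (1 - a * ↑u) * (t * q) = 1 - a * ↑u := by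
      have h2 := congrArg (fun z => (1 - a * ↑u) * z) hpq
      simp only [mul_add, mul_one] at h2
      rw [← mul_assoc, h0, zero_mul, zero_add] at h2
      exact h2
    have hee : (a * ↑u) * (a * ↑u) = a * ↑u := by
      rw [show (a * ↑u) * (a * ↑u) = (a * ↑u * a) * ↑u by noncomm_ring, hau]
    have hn2 : ((a * ↑u) * (t * q) * (1 - a * ↑u)) * ((a * ↑u) * (t * q) * (1 - a * ↑u)) = 0 := by
      have hne : (1 - a * ↑u) * (a * ↑u) = 0 := by
        rw [show (1 - a * ↑u) * (a * ↑u) = ((1 - a * ↑u) * a) * ↑u by noncomm_ring, h0, zero_mul]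
      calc ((a * ↑u) * (t * q) * (1 - a * ↑u)) * ((a * ↑u) * (t * q) * (1 - a * ↑u))
          = (a * ↑u) * (t * q) * (((1 - a * ↑u) * (a * ↑u)) * ((t * q) * (1 - a * ↑u))) := by
            noncomm_ring
        _ = 0 := by rw [hne, zero_mul, mul_zero]
    have hw : IsUnit (1 + (a * ↑u) * (t * q) * (1 - a * ↑u)) := by
      refine ⟨⟨1 + (a * ↑u) * (t * q) * (1 - a * ↑u),
        1 - (a * ↑u) * (t * q) * (1 - a * ↑u), ?_, ?_⟩, rfl⟩
      · rw [show (1 + (a * ↑u) * (t * q) * (1 - a * ↑u)) * (1 - (a * ↑u) * (t * q) * (1 - a * ↑u))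
          = 1 - ((a * ↑u) * (t * q) * (1 - a * ↑u)) * ((a * ↑u) * (t * q) * (1 - a * ↑u))
          by noncomm_ring, hn2, sub_zero]
      · rw [show (1 - (a * ↑u) * (t * q) * (1 - a * ↑u)) * (1 + (a * ↑u) * (t * q) * (1 - a * ↑u))
          = 1 - ((a * ↑u) * (t * q) * (1 - a * ↑u)) * ((a * ↑u) * (t * q) * (1 - a * ↑u))
          by noncomm_ring, hn2, sub_zero]
    have key : a * ↑u + t * q * (1 - a * ↑u) = 1 + (a * ↑u) * (t * q) * (1 - a * ↑u) := by
      calc a * ↑u + t * q * (1 - a * ↑u)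
          = a * ↑u + (a * ↑u) * (t * q) * (1 - a * ↑u)
            + ((1 - a * ↑u) * (t * q)) * (1 - a * ↑u) := by noncomm_ring
        _ = a * ↑u + (a * ↑u) * (t * q) * (1 - a * ↑u) + (1 - a * ↑u) * (1 - a * ↑u) := by
            rw [h1]
        _ = 1 + (a * ↑u) * (t * q) * (1 - a * ↑u) + ((a * ↑u) * (a * ↑u) - a * ↑u) := by
            noncomm_ring
        _ = 1 + (a * ↑u) * (t * q) * (1 - a * ↑u) := by rw [hee, sub_self, add_zero]
    refine ⟨q * (1 - a * ↑u) * ↑u⁻¹, ?_⟩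
    have huu : (↑u : R) * ↑u⁻¹ = 1 := Units.mul_inv u
    have hfin : a + t * (q * (1 - a * ↑u) * ↑u⁻¹)
        = (1 + (a * ↑u) * (t * q) * (1 - a * ↑u)) * ↑u⁻¹ := by
      calc a + t * (q * (1 - a * ↑u) * ↑u⁻¹)
          = a * ((↑u : R) * ↑u⁻¹) + t * (q * (1 - a * ↑u) * ↑u⁻¹) := by rw [huu, mul_one]
        _ = (a * ↑u + t * q * (1 - a * ↑u)) * ↑u⁻¹ := by noncomm_ring
        _ = (1 + (a * ↑u) * (t * q) * (1 - a * ↑u)) * ↑u⁻¹ := by rw [key]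
    rw [hfin]
    exact hw.mul (u⁻¹).isUnit
end

section
/- If a ∈ R has an inner inverse x (a = a·x·a) such that x has right stable range one, then a is unit-regular. -/
theorem unitRegular_of_innerInv_sr1 {R : Type*} [Ring R] (a x : R)
    (hx : a * x * a = a) (hsr : RightSR1 x) :
    ∃ u : R, IsUnit u ∧ a * u * a = a := by
  obtain ⟨b, hb⟩ := hsr (1 - x * a) ⟨a, 1, by noncomm_ring⟩
  refine ⟨x + (1 - x * a) * b, hb, ?_⟩
  have h0 : a * (1 - x * a) = 0 := by
    linear_combination (norm := noncomm_ring) -hx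
  calc a * (x + (1 - x * a) * b) * a
      = a * x * a + a * (1 - x * a) * (b * a) := by noncomm_ring
    _ = a := by rw [h0, hx]; noncomm_ring
end

section
/- If a ∈ R is regular with a² = 0, then a is a product of two idempotents and a is unit-regular; in particular a has right stable range one. -/
section aux

variable {R : Type*} [Ring R]

/-- If `a*a = 0`, `a*y*a = a`, `y*a*y = y`, then
`u = 1 + y + a - y*y*a - a*y - y*a + a*y*y*a` squares to 1 and `a*u*a = a`. -/
private lemma key_sq (a y : R) (h0 : a * a = 0) (h1 : a * (y * a) = a)
    (h2 : y * (a * y) = y) :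
    (1 + y + a - y*(y*a) - a*y - y*a + a*(y*(y*a))) *
      (1 + y + a - y*(y*a) - a*y - y*a + a*(y*(y*a))) = 1 := by
  have A0 : ∀ r : R, a * (a * r) = 0 := fun r => by
    rw [← mul_assoc, h0, zero_mul]
  have A1 : ∀ r : R, a * (y * (a * r)) = a * r := fun r => by
    rw [show a * (y * (a * r)) = (a * (y * a)) * r by simp only [mul_assoc], h1]
  have A2 : ∀ r : R, y * (a * (y * r)) = y * r := fun r => by
    rw [show y * (a * (y * r)) = (y * (a * y)) * r by simp only [mul_assoc], h2]
  simp only [mul_add, add_mul, mul_sub, sub_mul, mul_one, one_mul, mul_assoc,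
    h0, h1, h2, A0, A1, A2, mul_zero, zero_mul, add_zero, zero_add, sub_zero,
    zero_sub]
  abel

private lemma key_aua (a y : R) (h0 : a * a = 0) (h1 : a * (y * a) = a) :
    a * (1 + y + a - y*(y*a) - a*y - y*a + a*(y*(y*a))) * a = a := by
  have A0 : ∀ r : R, a * (a * r) = 0 := fun r => by
    rw [← mul_assoc, h0, zero_mul]
  have A1 : ∀ r : R, a * (y * (a * r)) = a * r := fun r => by
    rw [show a * (y * (a * r)) = (a * (y * a)) * r by simp only [mul_assoc], h1]
  simp only [mul_add, add_mul, mul_sub, sub_mul, mul_one, one_mul, mul_assoc,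
    h0, h1, A0, A1, mul_zero, zero_mul, add_zero, zero_add, sub_zero, zero_sub]

end aux

theorem sq_zero_regular {R : Type*} [Ring R] (a : R)
    (hreg : ∃ x : R, a * x * a = a) (hsq : a * a = 0) :
    (∃ e f : R, e * e = e ∧ f * f = f ∧ a = e * f) ∧
    (∃ u : R, IsUnit u ∧ a * u * a = a) ∧ RightSR1 a := by
  obtain ⟨x, hx⟩ := hreg
  have hx' : a * (x * a) = a := by rw [← mul_assoc]; exact hx
  -- Part 1: product of two idempotents
  have part1 : ∃ e f : R, e * e = e ∧ f * f = f ∧ a = e * f := by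
    refine ⟨1 - x*a + a, x*a, ?_, ?_, ?_⟩
    · have hfa : x * a * a = 0 := by rw [mul_assoc, hsq, mul_zero]
      have haf : a * (x * a) = a := hx'
      have hff : (x*a) * (x*a) = x*a := by
        rw [show (x*a)*(x*a) = x*(a*(x*a)) by simp only [mul_assoc], hx']
      simp only [mul_add, add_mul, mul_sub, sub_mul, mul_one, one_mul]
      rw [hff, haf, hsq, mul_assoc x a a, hsq, mul_zero]
      abel
    · rw [show (x*a)*(x*a) = x*(a*(x*a)) by simp only [mul_assoc], hx']
    · have hff : (x*a) * (x*a) = x*a := by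
        rw [show (x*a)*(x*a) = x*(a*(x*a)) by simp only [mul_assoc], hx']
      rw [add_mul, sub_mul, one_mul, hff, hx']
      abel
  -- normalized inner inverse y = x*a*x
  set y : R := x * a * x with hy
  have h1 : a * (y * a) = a := by
    rw [hy, show a * (x * a * x * a) = (a * (x*a)) * (x*a) by simp only [mul_assoc],
      hx', ← mul_assoc, hx]
  have h2 : y * (a * y) = y := by
    rw [hy, show x * a * x * (a * (x * a * x)) = x * ((a * (x*a)) * (x * (a * x)))
      by simp only [mul_assoc], hx']
    rw [show x * (a * (x * (a * x))) = x * ((a * (x * a)) * x) by simp only [mul_assoc],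
      hx', ← mul_assoc]
  set u : R := 1 + y + a - y*(y*a) - a*y - y*a + a*(y*(y*a)) with hu
  have huu : u * u = 1 := key_sq a y hsq h1 h2
  have haua : a * u * a = a := key_aua a y hsq h1
  have hUnit : IsUnit u := ⟨⟨u, u, huu, huu⟩, rfl⟩
  refine ⟨part1, ⟨u, hUnit, haua⟩, ?_⟩
  -- Part 3: right stable range one
  intro t ⟨p, q, hpq⟩
  refine ⟨q * ((1 - a*u) * u), ?_⟩
  have htq : t * q = 1 - a * p := eq_sub_of_add_eq' hpq
  have hna : (1 - a*u) * a = 0 := by rw [sub_mul, one_mul, haua, sub_self]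
  set n : R := a * p * (1 - a*u) with hn
  have hnn : n * n = 0 := by
    have h' : n * n = a * (p * (((1 - a*u) * a) * (p * (1 - a*u)))) := by
      rw [hn]; simp only [mul_assoc]
    rw [h', hna, zero_mul, mul_zero, mul_zero]
  have e0 : (1 - a*u) * u = u - a := by rw [sub_mul, one_mul, mul_assoc, huu, mul_one]
  have hstep : a + t * (q * ((1 - a*u) * u)) = (1 - n) * u := by
    rw [show t * (q * ((1 - a*u) * u)) = (t * q) * ((1 - a*u) * u) by
      simp only [mul_assoc], htq, e0]
    rw [sub_mul (1:R) n u, one_mul, hn, mul_assoc, e0]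
    noncomm_ring
  have h3 : ((1 - n) * u) * (u * (1 + n)) = 1 := by
    rw [mul_assoc, ← mul_assoc u u, huu, one_mul]
    have e2 : (1 - n) * (1 + n) = 1 - n * n := by noncomm_ring
    rw [e2, hnn, sub_zero]
  have h4 : (u * (1 + n)) * ((1 - n) * u) = 1 := by
    have e3 : (1 + n) * (1 - n) = 1 - n * n := by noncomm_ring
    rw [show (u * (1 + n)) * ((1 - n) * u) = u * (((1 + n) * (1 - n)) * u) by
      simp only [mul_assoc], e3, hnn, sub_zero, one_mul, huu]
  rw [hstep]
  exact ⟨⟨(1 - n) * u, u * (1 + n), h3, h4⟩, rfl⟩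
end

section
/- If e and f are idempotents in R with e·f = f·e = 0, then for every r ∈ R the element e·r·f has right stable range one, and for all r, s ∈ R the element e·r·f·s·e has right stable range one. -/
lemma key_unit {R : Type*} [Ring R] (e f : R) (he : e*e = e) (hf : f*f = f)
    (hef : e*f = 0) (hfe : f*e = 0) (r x : R) :
    IsUnit (e*r*f + (1 - e*r*f*x) * (1 - f*x*e)) := by
  have e1 : ∀ z : R, e*(f*z) = 0 := fun z ↦ by rw [← mul_assoc, hef, zero_mul]
  have e2 : ∀ z : R, f*(e*z) = 0 := fun z ↦ by rw [← mul_assoc, hfe, zero_mul]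
  have e3 : ∀ z : R, e*(e*z) = e*z := fun z ↦ by rw [← mul_assoc, he]
  have e4 : ∀ z : R, f*(f*z) = f*z := fun z ↦ by rw [← mul_assoc, hf]
  refine ⟨⟨_, (1 + f*x*e) * (1 - (e*r*f - e*r*f*x + e*r*f*x*e)), ?_, ?_⟩, rfl⟩ <;>
  · simp only [mul_add, add_mul, mul_sub, sub_mul, mul_one, one_mul, mul_assoc,
      e1, e2, e3, e4, he, hf, hef, hfe, mul_zero, zero_mul, add_zero, zero_add,
      sub_zero, zero_sub]
    abel

theorem rightSR1_erf {R : Type*} [Ring R] (e f : R)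
    (he : e * e = e) (hf : f * f = f) (hef : e * f = 0) (hfe : f * e = 0) :
    (∀ r : R, RightSR1 (e * r * f)) ∧ (∀ r s : R, RightSR1 (e * r * f * s * e)) := by
  have e1 : ∀ z : R, e*(f*z) = 0 := fun z ↦ by rw [← mul_assoc, hef, zero_mul]
  have e2 : ∀ z : R, f*(e*z) = 0 := fun z ↦ by rw [← mul_assoc, hfe, zero_mul]
  have e3 : ∀ z : R, e*(e*z) = e*z := fun z ↦ by rw [← mul_assoc, he]
  have e4 : ∀ z : R, f*(f*z) = f*z := fun z ↦ by rw [← mul_assoc, hf]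
  constructor
  · intro r t ⟨x, y, hxy⟩
    have hty : t * y = 1 - e*r*f*x := by rw [eq_sub_iff_add_eq, add_comm]; exact hxy
    refine ⟨y * (1 - f*x*e), ?_⟩
    have : e*r*f + t * (y * (1 - f*x*e)) = e*r*f + (1 - e*r*f*x) * (1 - f*x*e) := by
      rw [← mul_assoc, hty]
    rw [this]
    exact key_unit e f he hf hef hfe r x
  · intro r s t ⟨x, y, hxy⟩
    have hty : t * y = 1 - e*r*f*s*e*x := by rw [eq_sub_iff_add_eq, add_comm]; exact hxy
    -- abbreviations
    set a : R := e*r*f*s*e with ha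
    set d : R := 1 - a*x with hd
    set k : R := f*(s*e*x)*e with hk
    set q : R := f*s*e with hq
    set x2 : R := x*(e*r*f) with hx2
    set y2 : R := (1-k)*(1 - q*x2) + e*r*f with hy2
    set b0 : R := (1-k)*q + y2*(1 - e*x2*f) with hb0
    have hu : IsUnit (e*r*f + (1 - e*r*f*(s*e*x)) * (1 - f*(s*e*x)*e)) :=
      key_unit e f he hf hef hfe r (s*e*x)
    have hv : IsUnit (f*s*e + (1 - f*s*e*x2) * (1 - e*x2*f)) :=
      key_unit f e hf he hfe hef s x2
    refine ⟨y * b0, ?_⟩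
    have hrw : a + t * (y * b0) = a + d * b0 := by rw [← mul_assoc, hty]
    rw [hrw]
    have hkey : (e*r*f + (1 - e*r*f*(s*e*x)) * (1 - f*(s*e*x)*e)) *
        (f*s*e + (1 - f*s*e*x2) * (1 - e*x2*f)) = a + d * b0 := by
      rw [hb0, hy2, hx2, hq, hk, hd, ha]
      simp only [mul_add, add_mul, mul_sub, sub_mul, mul_one, one_mul, mul_assoc,
        e1, e2, e3, e4, he, hf, hef, hfe, mul_zero, zero_mul, add_zero, zero_add,
        sub_zero, zero_sub]
      abel
    rw [← hkey]
    exact hu.mul hv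
end

section
/- Let e, f be complementary idempotents in R (e + f = 1, e·f = f·e = 0), and let x be a unit of the corner ring eRe (with identity e) and y a unit of fRf (with identity f). Then for every p ∈ fRe, the element x + p + y is a unit of R. -/
theorem corner_unit_sum {R : Type*} [Ring R] (e f : R)
    (hef : e + f = 1) (he : e * e = e) (hf : f * f = f)
    (hef0 : e * f = 0) (hfe0 : f * e = 0)
    (x x' : R) (hx : e * x * e = x) (hx' : e * x' * e = x')
    (hxx' : x * x' = e) (hx'x : x' * x = e)
    (y y' : R) (hy : f * y * f = y) (hy' : f * y' * f = y')
    (hyy' : y * y' = f) (hy'y : y' * y = f)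
    (p : R) (hp : f * p * e = p) :
    IsUnit (x + p + y) := by
  -- absorption lemmas
  have hxe : x * e = x := by rw [← hx, mul_assoc, mul_assoc, he, ← mul_assoc]
  have hex : e * x = x := by rw [← hx, ← mul_assoc, ← mul_assoc, he]
  have hx'e : x' * e = x' := by rw [← hx', mul_assoc, mul_assoc, he, ← mul_assoc]
  have hex' : e * x' = x' := by rw [← hx', ← mul_assoc, ← mul_assoc, he]
  have hyf : y * f = y := by rw [← hy, mul_assoc, mul_assoc, hf, ← mul_assoc]
  have hfy : f * y = y := by rw [← hy, ← mul_assoc, ← mul_assoc, hf]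
  have hy'f : y' * f = y' := by rw [← hy', mul_assoc, mul_assoc, hf, ← mul_assoc]
  have hfy' : f * y' = y' := by rw [← hy', ← mul_assoc, ← mul_assoc, hf]
  have hpe : p * e = p := by rw [← hp, mul_assoc, mul_assoc, he, ← mul_assoc]
  have hfp : f * p = p := by rw [← hp, ← mul_assoc, ← mul_assoc, hf]
  -- cross products vanish
  have key1 : ∀ a b : R, a * e = a → f * b = b → a * b = 0 := fun a b ha hb => by
    rw [← ha, ← hb, mul_assoc, ← mul_assoc e f, hef0, zero_mul, mul_zero]
  have key2 : ∀ a b : R, a * f = a → e * b = b → a * b = 0 := fun a b ha hb => by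
    rw [← ha, ← hb, mul_assoc, ← mul_assoc f e, hfe0, zero_mul, mul_zero]
  have hxy' : x * y' = 0 := key1 x y' hxe hfy'
  have hpy' : p * y' = 0 := key1 p y' hpe hfy'
  have hyx' : y * x' = 0 := key2 y x' hyf hex'
  have hx'p : x' * p = 0 := key1 x' p hx'e hfp
  have hx'y : x' * y = 0 := key1 x' y hx'e hfy
  have hy'x : y' * x = 0 := key2 y' x hy'f hex
  refine ⟨⟨x + p + y, x' + y' - y' * p * x', ?_, ?_⟩, rfl⟩
  · simp only [mul_sub, mul_add, add_mul, sub_mul, ← mul_assoc,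
      hxx', hxy', hpy', hyx', hyy', hfp, zero_mul, mul_zero, sub_zero, add_zero, zero_add]
    rw [← hef]; abel
  · simp only [mul_sub, mul_add, add_mul, sub_mul, ← mul_assoc,
      hx'x, hx'p, hx'y, hy'x, hy'y, hpe, zero_mul, mul_zero, sub_zero, add_zero, zero_add]
    rw [mul_assoc _ x' x, hx'x, mul_assoc _ x' p, hx'p, mul_assoc _ x' y, hx'y,
      mul_zero, mul_assoc y' p e, hpe, ← hef]
    abel
end
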